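/- In the FBD-α process, for all t, the frozen mass f_t is supported on at most two points on each side of the origin: f_t(y) = 0 whenever |y| ≥ β_t + 2. Moreover μ_t(y) = 0 for |y| ≥ β_t + 2. -/
import Mathlib


open Real

/-- The mass of `μ` on the half-line `[x, ∞)`. -/
noncomputable def tailMass (μ : ℤ → ℝ) (x : ℤ) : ℝ := ∑' y : {y : ℤ // x ≤ y}, μ y

/-- The boundary `β = sup {x : μ([x,∞)) ≥ α/2}`. -/
noncomputable def bdry (α : ℝ) (μ : ℤ → ℝ) : ℤ := sSup {x : ℤ | α / 2 ≤ tailMass μ x}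

/-- The frozen mass: the extreme `α/2` mass on each side of the origin. -/
noncomputable def frozen (α : ℝ) (μ : ℤ → ℝ) : ℤ → ℝ := fun y =>
  let b := bdry α μ
  let v : ℤ → ℝ := fun w =>
    if b < w then μ w
    else if w = b then α / 2 - ∑' z : {z : ℤ // b < z}, μ z
    else 0
  if 0 ≤ y then v y else v (-y)

/-- The free mass `ν = μ - f`. -/
noncomputable def free (α : ℝ) (μ : ℤ → ℝ) : ℤ → ℝ := fun x => μ x - frozen α μ x

/-- One step of the Frozen-Boundary Diffusion:
`μ_{t+1}(x) = (ν_t(x-1) + ν_t(x+1))/2 + f_t(x)`. -/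
noncomputable def FBDstep (α : ℝ) (μ : ℤ → ℝ) : ℤ → ℝ := fun x =>
  (free α μ (x - 1) + free α μ (x + 1)) / 2 + frozen α μ x

/-- The Frozen-Boundary Diffusion with parameter `α`, started from `μ_0 = δ_0`. -/
noncomputable def FBD (α : ℝ) : ℕ → ℤ → ℝ
  | 0 => fun x => if x = 0 then 1 else 0
  | t + 1 => FBDstep α (FBD α t)

/-! ### Auxiliary lemmas -/

lemma frozen_def (α : ℝ) (μ : ℤ → ℝ) (y : ℤ) :
    frozen α μ y =
      if 0 ≤ y then
        (if bdry α μ < y then μ y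
         else if y = bdry α μ then α / 2 - ∑' z : {z : ℤ // bdry α μ < z}, μ z else 0)
      else
        (if bdry α μ < -y then μ (-y)
         else if -y = bdry α μ then α / 2 - ∑' z : {z : ℤ // bdry α μ < z}, μ z else 0) := rfl

lemma tail_zero (μ : ℤ → ℝ) (x : ℤ) (h : ∀ y, x ≤ y → μ y = 0) : tailMass μ x = 0 := by
  unfold tailMass
  have : ∀ y : {y : ℤ // x ≤ y}, μ y = 0 := fun ⟨y, hy⟩ => h y hy
  simp [this]

lemma tail_single (μ : ℤ → ℝ) (x : ℤ) (h : ∀ y, x + 1 ≤ y → μ y = 0) :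
    tailMass μ x = μ x := by
  unfold tailMass
  exact tsum_eq_single (⟨x, le_refl x⟩ : {y : ℤ // x ≤ y}) (by
    rintro ⟨y, hy⟩ hne
    have : y ≠ x := by simpa [Subtype.ext_iff] using hne
    exact h y (by omega))

lemma tail_pair (μ : ℤ → ℝ) (x : ℤ) (h : ∀ y, x + 2 ≤ y → μ y = 0) :
    tailMass μ x = μ x + μ (x + 1) := by
  have hx1 : x ≤ x + 1 := by omega
  unfold tailMass
  rw [tsum_eq_sum (s := ({⟨x, le_refl x⟩, ⟨x + 1, hx1⟩} : Finset {y : ℤ // x ≤ y}))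
    (by
      rintro ⟨y, hy⟩ hys
      simp only [Finset.mem_insert, Finset.mem_singleton, Subtype.mk.injEq] at hys
      push_neg at hys
      exact h y (by omega))]
  rw [Finset.sum_pair (by simp only [ne_eq, Subtype.mk.injEq]; omega)]

/-- The main invariant of the FBD process, proved for one step. -/
lemma step_inv (α : ℝ) (hα0 : 0 < α) (μ : ℤ → ℝ)
    (hsym : ∀ x, μ (-x) = μ x) (hpos : ∀ x, 0 ≤ μ x)
    (hb : 0 ≤ bdry α μ)
    (h5 : α / 2 ≤ tailMass μ (bdry α μ))
    (h6 : tailMass μ (bdry α μ + 1) < α / 2)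
    (h7 : ∀ y, bdry α μ + 2 ≤ |y| → μ y = 0) :
    (∀ x, FBDstep α μ (-x) = FBDstep α μ x) ∧ (∀ x, 0 ≤ FBDstep α μ x) ∧
    0 ≤ bdry α (FBDstep α μ) ∧
    α / 2 ≤ tailMass (FBDstep α μ) (bdry α (FBDstep α μ)) ∧
    tailMass (FBDstep α μ) (bdry α (FBDstep α μ) + 1) < α / 2 ∧
    (∀ y, bdry α (FBDstep α μ) + 2 ≤ |y| → FBDstep α μ y = 0) := by
  set b := bdry α μ with hbdef
  -- the tail beyond b is exactly μ (b+1)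
  have hT : (∑' z : {z : ℤ // b < z}, μ z) = μ (b + 1) := by
    refine tsum_eq_single (⟨b + 1, by omega⟩ : {z : ℤ // b < z}) ?_
    rintro ⟨z, hz⟩ hne
    have : z ≠ b + 1 := by simpa [Subtype.ext_iff] using hne
    exact h7 z (by rw [abs_of_nonneg (by omega)]; omega)
  have htb : tailMass μ b = μ b + μ (b + 1) :=
    tail_pair μ b (fun y hy => h7 y (by rw [abs_of_nonneg (by omega)]; omega))
  have htb1 : tailMass μ (b + 1) = μ (b + 1) :=
    tail_single μ (b + 1) (fun y hy => h7 y (by rw [abs_of_nonneg (by omega)]; omega))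
  have hμb1 : μ (b + 1) < α / 2 := by rw [← htb1]; exact h6
  -- values of the frozen mass
  have hf_gt : ∀ y, b < |y| → frozen α μ y = μ y := by
    intro y hy
    rw [frozen_def, ← hbdef]
    rcases le_or_gt 0 y with h0 | h0
    · rw [abs_of_nonneg h0] at hy
      simp [h0, hy]
    · rw [abs_of_neg h0] at hy
      rw [if_neg (by omega), if_pos hy, hsym]
  have hf_lt : ∀ y, |y| < b → frozen α μ y = 0 := by
    intro y hy
    rw [frozen_def, ← hbdef]
    rcases le_or_gt 0 y with h0 | h0
    · rw [abs_of_nonneg h0] at hy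
      rw [if_pos h0, if_neg (by omega), if_neg (by omega)]
    · rw [abs_of_neg h0] at hy
      rw [if_neg (by omega), if_neg (by omega), if_neg (by omega)]
  have hf_b : ∀ y, |y| = b → frozen α μ y = α / 2 - μ (b + 1) := by
    intro y hy
    rw [frozen_def, ← hbdef, hT]
    rcases le_or_gt 0 y with h0 | h0
    · rw [abs_of_nonneg h0] at hy
      rw [if_pos h0, if_neg (by omega), if_pos hy]
    · rw [abs_of_neg h0] at hy
      rw [if_neg (by omega), if_neg (by omega), if_pos hy]
  have hf_nonneg : ∀ y, 0 ≤ frozen α μ y := by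
    intro y
    rcases lt_trichotomy (|y|) b with h | h | h
    · rw [hf_lt y h]
    · rw [hf_b y h]; linarith
    · rw [hf_gt y h]; exact hpos y
  have hf_symm : ∀ y, frozen α μ (-y) = frozen α μ y := by
    intro y
    rcases lt_trichotomy (|y|) b with h | h | h
    · rw [hf_lt _ (by rwa [abs_neg]), hf_lt _ h]
    · rw [hf_b _ (by rwa [abs_neg]), hf_b _ h]
    · rw [hf_gt _ (by rwa [abs_neg]), hf_gt _ h, hsym]
  -- values of the free mass
  have hν_gt : ∀ y, b < |y| → free α μ y = 0 := by
    intro y hy; rw [free, hf_gt y hy]; ring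
  have hν_nonneg : ∀ y, 0 ≤ free α μ y := by
    intro y
    rcases lt_trichotomy (|y|) b with h | h | h
    · rw [free, hf_lt y h]; simpa using hpos y
    · have hyy : μ y = μ b := by
        rcases abs_cases y with ⟨h1, _⟩ | ⟨h1, _⟩
        · rw [h1] at h; rw [h]
        · rw [← hsym y, ← h, h1]
      rw [free, hf_b y h, hyy]
      have := h5; rw [htb] at this; linarith
    · rw [hν_gt y h]
  have hν_symm : ∀ y, free α μ (-y) = free α μ y := by
    intro y; rw [free, free, hsym, hf_symm]
  -- properties of the new measure
  have hsym' : ∀ x, FBDstep α μ (-x) = FBDstep α μ x := by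
    intro x
    show (free α μ (-x - 1) + free α μ (-x + 1)) / 2 + frozen α μ (-x)
      = (free α μ (x - 1) + free α μ (x + 1)) / 2 + frozen α μ x
    have e1 : -x - 1 = -(x + 1) := by ring
    have e2 : -x + 1 = -(x - 1) := by ring
    rw [e1, e2, hν_symm, hν_symm, hf_symm]; ring
  have hpos' : ∀ x, 0 ≤ FBDstep α μ x := by
    intro x
    have := hν_nonneg (x - 1); have := hν_nonneg (x + 1); have := hf_nonneg x
    show 0 ≤ (free α μ (x - 1) + free α μ (x + 1)) / 2 + frozen α μ x
    linarith
  have hsupp' : ∀ y, b + 2 ≤ |y| → FBDstep α μ y = 0 := by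
    intro y hy
    show (free α μ (y - 1) + free α μ (y + 1)) / 2 + frozen α μ y = 0
    have h1 : free α μ (y - 1) = 0 := by
      apply hν_gt
      rcases le_abs.mp hy with h | h
      · rw [abs_of_nonneg (by omega)]; omega
      · rw [abs_of_nonpos (by omega)]; omega
    have h2 : free α μ (y + 1) = 0 := by
      apply hν_gt
      rcases le_abs.mp hy with h | h
      · rw [abs_of_nonneg (by omega)]; omega
      · rw [abs_of_nonpos (by omega)]; omega
    have h3 : frozen α μ y = 0 := by
      rw [hf_gt y (by omega)]
      exact h7 y hy
    rw [h1, h2, h3]; ring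
  -- the new boundary
  have htb' : tailMass (FBDstep α μ) b = FBDstep α μ b + FBDstep α μ (b + 1) :=
    tail_pair _ b (fun y hy => hsupp' y (by rw [abs_of_nonneg (by omega)]; omega))
  have hkey : α / 2 ≤ tailMass (FBDstep α μ) b := by
    rw [htb']
    have e1 : FBDstep α μ b = (free α μ (b - 1) + free α μ (b + 1)) / 2 + frozen α μ b := rfl
    have e2 : FBDstep α μ (b + 1)
        = (free α μ (b + 1 - 1) + free α μ (b + 1 + 1)) / 2 + frozen α μ (b + 1) := rfl
    have e3 : b + 1 - 1 = b := by ring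
    have e4 : free α μ (b + 1) = 0 := hν_gt _ (by rw [abs_of_nonneg (by omega)]; omega)
    have e5 : free α μ (b + 1 + 1) = 0 := hν_gt _ (by rw [abs_of_nonneg (by omega)]; omega)
    have e6 : frozen α μ b = α / 2 - μ (b + 1) := hf_b b (abs_of_nonneg hb)
    have e7 : frozen α μ (b + 1) = μ (b + 1) :=
      hf_gt _ (by rw [abs_of_nonneg (by omega)]; omega)
    rw [e1, e2, e3, e4, e5, e6, e7]
    have := hν_nonneg (b - 1); have := hν_nonneg b
    linarith
  have hSb : b ∈ {x : ℤ | α / 2 ≤ tailMass (FBDstep α μ) x} := hkey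
  have hSbdd : BddAbove {x : ℤ | α / 2 ≤ tailMass (FBDstep α μ) x} := by
    refine ⟨b + 1, fun x hx => ?_⟩
    by_contra hc
    push_neg at hc
    have hz : tailMass (FBDstep α μ) x = 0 :=
      tail_zero _ x (fun y hy => hsupp' y (by rw [abs_of_nonneg (by omega)]; omega))
    rw [Set.mem_setOf_eq, hz] at hx
    linarith
  have hb'mem : bdry α (FBDstep α μ) ∈ {x : ℤ | α / 2 ≤ tailMass (FBDstep α μ) x} :=
    Int.csSup_mem ⟨b, hSb⟩ hSbdd
  have hble : b ≤ bdry α (FBDstep α μ) := le_csSup hSbdd hSb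
  refine ⟨hsym', hpos', by omega, hb'mem, ?_, fun y hy => hsupp' y (by omega)⟩
  by_contra hc
  push_neg at hc
  have : bdry α (FBDstep α μ) + 1 ≤ bdry α (FBDstep α μ) := le_csSup hSbdd hc
  omega

lemma FBD_inv (α : ℝ) (hα : α ∈ Set.Ioo (0:ℝ) 1) (t : ℕ) :
    (∀ x, FBD α t (-x) = FBD α t x) ∧ (∀ x, 0 ≤ FBD α t x) ∧
    0 ≤ bdry α (FBD α t) ∧
    α / 2 ≤ tailMass (FBD α t) (bdry α (FBD α t)) ∧
    tailMass (FBD α t) (bdry α (FBD α t) + 1) < α / 2 ∧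
    (∀ y, bdry α (FBD α t) + 2 ≤ |y| → FBD α t y = 0) := by
  obtain ⟨hα0, hα1⟩ := hα
  induction t with
  | zero =>
    have htail : ∀ x : ℤ, x ≤ 0 → tailMass (FBD α 0) x = 1 := by
      intro x hx
      have : tailMass (FBD α 0) x = FBD α 0 0 := by
        unfold tailMass
        exact tsum_eq_single (⟨0, hx⟩ : {y : ℤ // x ≤ y}) (by
          rintro ⟨y, hy⟩ hne
          have : y ≠ 0 := by simpa [Subtype.ext_iff] using hne
          show FBD α 0 y = 0
          simp [FBD, this])
      rw [this]; simp [FBD]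
    have htail0 : ∀ x : ℤ, 0 < x → tailMass (FBD α 0) x = 0 := by
      intro x hx
      exact tail_zero _ x (fun y hy => by
        have : y ≠ 0 := by omega
        simp [FBD, this])
    have hS : {x : ℤ | α / 2 ≤ tailMass (FBD α 0) x} = Set.Iic 0 := by
      ext x
      simp only [Set.mem_setOf_eq, Set.mem_Iic]
      constructor
      · intro h
        by_contra hc
        push_neg at hc
        rw [htail0 x hc] at h
        linarith
      · intro h
        rw [htail x h]
        linarith
    have hb0 : bdry α (FBD α 0) = 0 := by rw [bdry, hS, csSup_Iic]
    refine ⟨?_, ?_, ?_, ?_, ?_, ?_⟩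
    · intro x; simp [FBD, neg_eq_zero]
    · intro x; simp only [FBD]; split <;> norm_num
    · rw [hb0]
    · rw [hb0, htail 0 le_rfl]; linarith
    · rw [hb0, show (0:ℤ) + 1 = 1 from rfl, htail0 1 (by omega)]; linarith
    · intro y hy
      rw [hb0] at hy
      have : y ≠ 0 := by rcases abs_cases y with ⟨h, _⟩ | ⟨h, _⟩ <;> omega
      simp [FBD, this]
  | succ t ih =>
    obtain ⟨h1, h2, h3, h4, h5, h6⟩ := ih
    exact step_inv α hα0 (FBD α t) h1 h2 h3 h4 h5 h6

/-- In the FBD-α process, the frozen mass is supported on at most two points on each side: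
`f_t(y) = 0` and `μ_t(y) = 0` whenever `|y| ≥ β_t + 2`. -/
theorem stmt11 (α : ℝ) (hα : α ∈ Set.Ioo (0:ℝ) 1) (t : ℕ) (y : ℤ)
    (hy : bdry α (FBD α t) + 2 ≤ |y|) :
    frozen α (FBD α t) y = 0 ∧ FBD α t y = 0 := by
  obtain ⟨hsym, hpos, hb, h5, h6, h7⟩ := FBD_inv α hα t
  have hμ : FBD α t y = 0 := h7 y hy
  refine ⟨?_, hμ⟩
  rw [frozen_def]
  rcases le_or_gt 0 y with h0 | h0
  · rw [abs_of_nonneg h0] at hy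
    rw [if_pos h0, if_pos (by omega)]
    exact hμ
  · rw [abs_of_neg h0] at hy
    rw [if_neg (by omega), if_pos (by omega), hsym]
    exact hμ
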